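/- arXiv:2405.18083 — 7 statements merged into one kernel-verified Lean document; each statement's English description precedes it below -/
import Mathlib

section
/- Let X be a topological space, T : X → X continuous, μ a T-invariant Borel probability measure, and φ : X → ℝ upper semi-continuous and μ-integrable with ∫ φ dμ = 0. Suppose γ := sup over n ≥ 1 and x ∈ X of the Birkhoff sum S_n φ(x) is finite. Then for every n ≥ 1 and every x in the support of μ, S_n φ(x) ≥ -γ. -/
/-!
Suppose `S_n φ(x) < δ < -γ`. Upper semi-continuity makes `U = {S_n φ < δ}` an open neighbourhood
of `x`, so `μ U > 0`. By Poincaré recurrence almost every point of `U` returns to `U` infinitely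
often; each visit contributes less than `δ` to the Birkhoff sum and the stretches in between at
most `γ`, so the Birkhoff sums of such a point tend to `-∞`. This is impossible on a set of positive
measure: `γ - S_M φ ≥ 0` has integral `γ` for every `M`, so Fatou's lemma bounds the integral of
its limit inferior by `γ`.
-/

open MeasureTheory Filter

theorem UpperSemicontinuous.birkhoffSum {X M : Type*} [TopologicalSpace X] [AddCommMonoid M]
    [LinearOrder M] [IsOrderedAddMonoid M] [TopologicalSpace M] [OrderTopology M] [ContinuousAdd M]
    {T : X → X} {φ : X → M} (hφ : UpperSemicontinuous φ) (hT : Continuous T) (n : ℕ) :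
    UpperSemicontinuous (birkhoffSum T φ n) :=
  upperSemicontinuous_sum fun k _ => hφ.comp (hT.iterate k)

section Integral

variable {X E : Type*} [MeasurableSpace X] [NormedAddCommGroup E]
  {μ : Measure X} {T : X → X} {φ : X → E}

theorem MeasureTheory.MeasurePreserving.integral_comp_of_aestronglyMeasurable [NormedSpace ℝ E]
    (hT : MeasurePreserving T μ μ) (hφ : AEStronglyMeasurable φ μ) :
    ∫ x, φ (T x) ∂μ = ∫ x, φ x ∂μ := by
  rw [← integral_map hT.measurable.aemeasurable (hφ.mono_measure hT.map_eq.le), hT.map_eq]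

theorem integrable_birkhoffSum (hT : MeasurePreserving T μ μ) (hφ : Integrable φ μ) (n : ℕ) :
    Integrable (birkhoffSum T φ n) μ :=
  integrable_finsetSum _ fun k _ => (hT.iterate k).integrable_comp_of_integrable hφ

theorem integral_birkhoffSum [NormedSpace ℝ E] (hT : MeasurePreserving T μ μ)
    (hφ : Integrable φ μ) (n : ℕ) : ∫ x, birkhoffSum T φ n x ∂μ = n • ∫ x, φ x ∂μ := by
  simp only [birkhoffSum]
  rw [integral_finsetSum (f := fun k x => φ (T^[k] x)) _ fun k _ =>
    (hT.iterate k).integrable_comp_of_integrable hφ]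
  simp [(hT.iterate _).integral_comp_of_aestronglyMeasurable hφ.aestronglyMeasurable]

end Integral

section Returns

variable {X : Type*} {T : X → X} {φ : X → ℝ}

theorem frequently_iterate_iterate {p : X → Prop} {x : X} (hx : ∃ᶠ m in atTop, p (T^[m] x))
    (j : ℕ) : ∃ᶠ m in atTop, p (T^[m] (T^[j] x)) := by
  rw [← map_add_atTop_eq_nat j, frequently_map] at hx
  simpa only [← Function.iterate_add_apply] using hx

/-- Split `S_{m+n+a} = S_m + S_n ∘ T^m + S_a ∘ T^{m+n}` at a visit `m` to `{S_n φ ≤ δ}`: the first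
and last pieces are at most `γ`, so each visit lowers the bound by `-(γ + δ)`. -/
theorem eventually_birkhoffSum_le_of_frequently {γ δ : ℝ} {n : ℕ}
    (hle : ∀ M y, birkhoffSum T φ M y ≤ γ) (k : ℕ) {x : X}
    (hx : ∃ᶠ m in atTop, birkhoffSum T φ n (T^[m] x) ≤ δ) :
    ∀ᶠ M in atTop, birkhoffSum T φ M x ≤ γ + k * (γ + δ) := by
  induction k generalizing x with
  | zero =>
    simp only [Nat.cast_zero, zero_mul, add_zero]
    exact Eventually.of_forall fun M => hle M x
  | succ k ih =>
    obtain ⟨m, hm⟩ := hx.exists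
    rw [← map_add_atTop_eq_nat (m + n), eventually_map]
    have hz := frequently_iterate_iterate (p := (birkhoffSum T φ n · ≤ δ)) hx (m + n)
    filter_upwards [ih hz] with a ha
    rw [Nat.add_comm a, birkhoffSum_add, birkhoffSum_add]
    have := hle m x
    push_cast
    linarith

theorem tendsto_birkhoffSum_atBot_of_frequently {γ δ : ℝ} {n : ℕ}
    (hle : ∀ M y, birkhoffSum T φ M y ≤ γ) (hδ : γ + δ < 0) {x : X}
    (hx : ∃ᶠ m in atTop, birkhoffSum T φ n (T^[m] x) ≤ δ) :
    Tendsto (birkhoffSum T φ · x) atTop atBot := by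
  refine tendsto_atBot.2 fun b => ?_
  obtain ⟨k, hk⟩ := exists_nat_ge ((b - γ) / (γ + δ))
  filter_upwards [eventually_birkhoffSum_le_of_frequently hle k hx] with M hM
  nlinarith [(div_le_iff_of_neg hδ).1 hk]

end Returns

/-- Fatou's lemma for `γ - f M ≥ 0`, whose limit inferior is `⊤` on `s`. -/
theorem measure_eq_zero_of_ae_tendsto_atBot {X : Type*} [MeasurableSpace X] {μ : Measure X}
    [IsFiniteMeasure μ] {f : ℕ → X → ℝ} {γ c : ℝ} (hf : ∀ M, Integrable (f M) μ)
    (hle : ∀ M, ∀ᵐ x ∂μ, f M x ≤ γ) (hc : ∀ M, c ≤ ∫ x, f M x ∂μ) {s : Set X}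
    (hs : MeasurableSet s) (hs_tendsto : ∀ᵐ x ∂μ, x ∈ s → Tendsto (f · x) atTop atBot) :
    μ s = 0 := by
  set F : ℕ → X → ENNReal := fun M x => ENNReal.ofReal (γ - f M x)
  have hF_bound (M : ℕ) : ∫⁻ x, F M x ∂μ ≤ ENNReal.ofReal (γ * μ.real Set.univ - c) := by
    have hint : Integrable (fun x => γ - f M x) μ := (integrable_const γ).sub (hf M)
    rw [← ofReal_integral_eq_lintegral_ofReal hint
      ((hle M).mono fun x hx => sub_nonneg.2 hx), integral_sub (integrable_const γ) (hf M),
      integral_const, smul_eq_mul, mul_comm]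
    exact ENNReal.ofReal_le_ofReal (by linarith [hc M])
  have hF_top : ∀ᵐ x ∂μ, x ∈ s → liminf (F · x) atTop = ⊤ := by
    filter_upwards [hs_tendsto] with x hx hxs
    exact (ENNReal.tendsto_ofReal_atTop.comp (tendsto_atTop.2 fun b =>
      ((hx hxs).eventually_le_atBot (γ - b)).mono fun M hM => by linarith)).liminf_eq
  have hfatou : ⊤ * μ s ≤ ENNReal.ofReal (γ * μ.real Set.univ - c) :=
    calc ⊤ * μ s = ∫⁻ x in s, liminf (F · x) atTop ∂μ := by
          rw [setLIntegral_congr_fun_ae hs hF_top, setLIntegral_const]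
      _ ≤ ∫⁻ x, liminf (F · x) atTop ∂μ := setLIntegral_le_lintegral _ _
      _ ≤ liminf (fun M => ∫⁻ x, F M x ∂μ) atTop :=
          lintegral_liminf_le' fun M => (hf M).aemeasurable.const_sub γ |>.ennreal_ofReal
      _ ≤ _ := liminf_le_of_frequently_le' (.of_forall hF_bound)
  by_contra h
  simp [ENNReal.top_mul h] at hfatou

/-- Morris: if `∫ φ dμ = 0` and all Birkhoff sums of the upper
semi-continuous function `φ` are bounded above by `γ`, then all Birkhoff sums
along points of the support of `μ` are bounded below by `-γ`. -/
theorem stmt1 {X : Type*} [TopologicalSpace X] [MeasurableSpace X] [BorelSpace X]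
    (T : X → X) (hT : Continuous T)
    (μ : Measure X) [IsProbabilityMeasure μ] (hμ : μ.map T = μ)
    (φ : X → ℝ) (hφ : UpperSemicontinuous φ) (hint : Integrable φ μ)
    (h0 : ∫ x, φ x ∂μ = 0)
    (γ : ℝ)
    (hγ : ∀ n : ℕ, 1 ≤ n → ∀ x : X, ∑ k ∈ Finset.range n, φ (T^[k] x) ≤ γ) :
    ∀ n : ℕ, 1 ≤ n → ∀ x : X,
      (∀ U : Set X, IsOpen U → x ∈ U → 0 < μ U) →
      -γ ≤ ∑ k ∈ Finset.range n, φ (T^[k] x) := by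
  intro n _ x hx
  by_contra! hlt
  have hTμ : MeasurePreserving T μ μ := ⟨hT.measurable, hμ⟩
  have hγ_nonneg : 0 ≤ γ := by
    simpa [h0] using integral_mono hint (integrable_const γ) fun y => by simpa using hγ 1 le_rfl y
  have hle : ∀ M y, birkhoffSum T φ M y ≤ γ := fun M y => by
    rcases M.eq_zero_or_pos with rfl | hM
    · simpa using hγ_nonneg
    · exact hγ M hM y
  obtain ⟨δ, hxδ, hδ⟩ := exists_between hlt
  set U := birkhoffSum T φ n ⁻¹' Set.Iio δ
  have hU : IsOpen U := (hφ.birkhoffSum hT n).isOpen_preimage δ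
  refine (hx U hU hxδ).ne' (measure_eq_zero_of_ae_tendsto_atBot (c := 0)
    (integrable_birkhoffSum hTμ hint) (fun M => ae_of_all _ (hle M))
    (fun M => by rw [integral_birkhoffSum hTμ hint, h0, smul_zero]) hU.measurableSet ?_)
  filter_upwards [hTμ.conservative.ae_mem_imp_frequently_image_mem
    hU.measurableSet.nullMeasurableSet] with y hy hyU
  exact tendsto_birkhoffSum_atBot_of_frequently hle (by linarith)
    ((hy hyU).mono fun _ (hm : _ < δ) => hm.le)
end

section
/- Let X be a compact metric space, T : X → X continuous, and φ : X → ℝ continuous with γ(φ) := sup_{n≥1, x∈X} (S_n φ(x) - n β(φ)) < +∞. If μ is a maximizing measure of φ (i.e., ∫ φ dμ = β(φ)) and ν is a T-invariant Borel probability measure with supp ν ⊆ supp μ, then ν is also a maximizing measure of φ. -/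
/-!
Write `B = β(φ)` and `f_k = S_k φ - k B`. The function `M = sup_k f_k` takes values between
`f_0 = 0` and `max γ 0`, and the cocycle identity `f_{n+k} = f_n + f_k ∘ Tⁿ` gives
`f_n + M ∘ Tⁿ ≤ M`. Both sides have the same `μ`-integral, because `∫ f_n dμ = n (∫ φ dμ - B) = 0`,
so equality holds `μ`-a.e. and `f_n ≥ -M ∘ Tⁿ ≥ -max γ 0` holds `μ`-a.e.; by continuity this bound
holds on `supp μ`, hence `ν`-a.e. Integrating against `ν`, `n (∫ φ dν - B)` is bounded in `n`,
so `∫ φ dν = B`.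
-/

open MeasureTheory

noncomputable def beta {X : Type*} [TopologicalSpace X] [MeasurableSpace X]
    (T : X → X) (φ : X → ℝ) : ℝ :=
  sSup ((fun μ : Measure X => ∫ x, φ x ∂μ) ''
    {μ : Measure X | IsProbabilityMeasure μ ∧ μ.map T = μ})

/-- topological support of a measure -/
def msupp {X : Type*} [TopologicalSpace X] [MeasurableSpace X] (μ : Measure X) : Set X :=
  {x | ∀ U : Set X, IsOpen U → x ∈ U → 0 < μ U}

theorem msupp_eq_support {X : Type*} [TopologicalSpace X] [MeasurableSpace X] (μ : Measure X) :
    msupp μ = μ.support := by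
  ext x
  simp only [msupp, Measure.support_eq_forall_isOpen, Set.mem_ofPred_eq]
  exact forall_congr' fun _ => forall_comm

theorem MeasureTheory.Measure.ae_mem_of_support_subset {X : Type*} [TopologicalSpace X]
    [HereditarilyLindelofSpace X] [MeasurableSpace X] {μ ν : Measure X}
    (hsupp : ν.support ⊆ μ.support) {s : Set X} (hs : IsClosed s) (h : ∀ᵐ x ∂μ, x ∈ s) :
    ∀ᵐ x ∂ν, x ∈ s :=
  Filter.mem_of_superset ν.support_mem_ae (hsupp.trans (μ.support_subset_of_isClosed hs h))

theorem continuous_birkhoffSum {X : Type*} [TopologicalSpace X] {T : X → X} {g : X → ℝ}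
    (hT : Continuous T) (hg : Continuous g) (n : ℕ) : Continuous (birkhoffSum T g n) :=
  continuous_finsetSum _ fun k _ => hg.comp (hT.iterate k)

theorem eq_zero_of_forall_nat_mul_mem_Icc {d a b : ℝ}
    (h : ∀ n : ℕ, 1 ≤ n → (n : ℝ) * d ∈ Set.Icc a b) : d = 0 := by
  by_contra hd
  have hd : 0 < |d| := abs_pos.2 hd
  obtain ⟨n, hn⟩ := exists_nat_gt ((|a| + |b|) / |d|)
  have hn1 : 1 ≤ n := Nat.cast_pos.1 <| lt_of_le_of_lt (by positivity) hn
  obtain ⟨hla, hlb⟩ := h n hn1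
  have hbounded := abs_le_max_abs_abs hla hlb
  rw [div_lt_iff₀ hd] at hn
  rw [abs_mul, Nat.abs_cast] at hbounded
  linarith [max_le_add_of_nonneg (abs_nonneg a) (abs_nonneg b)]

namespace MeasureTheory.MeasurePreserving

variable {α β : Type*} [MeasurableSpace α] [MeasurableSpace β] {μ : Measure α} {ν : Measure β}

theorem integral_comp_of_aestronglyMeasurable_s2 {f : α → β} (hf : MeasurePreserving f μ ν)
    {g : β → ℝ} (hg : AEStronglyMeasurable g ν) : ∫ x, g (f x) ∂μ = ∫ y, g y ∂ν := by
  rw [← integral_map hf.aemeasurable (hf.map_eq ▸ hg), hf.map_eq]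

variable {T : α → α} {g : α → ℝ}

theorem integrable_birkhoffSum (hT : MeasurePreserving T μ μ) (hg : Integrable g μ) (n : ℕ) :
    Integrable (birkhoffSum T g n) μ :=
  integrable_finsetSum _ fun k _ => (hT.iterate k).integrable_comp_of_integrable hg

theorem integral_birkhoffSum (hT : MeasurePreserving T μ μ) (hg : Integrable g μ) (n : ℕ) :
    ∫ x, birkhoffSum T g n x ∂μ = n * ∫ x, g x ∂μ := by
  simp only [birkhoffSum]
  rw [integral_finsetSum (f := fun k x => g (T^[k] x)) _
    fun k _ => (hT.iterate k).integrable_comp_of_integrable hg]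
  simp [(hT.iterate _).integral_comp_of_aestronglyMeasurable_s2 hg.aestronglyMeasurable]

theorem ae_neg_le_birkhoffSum [IsFiniteMeasure μ] (hT : MeasurePreserving T μ μ)
    (hg : Integrable g μ) (hg0 : ∫ x, g x ∂μ = 0) {C : ℝ}
    (hC : ∀ k x, birkhoffSum T g k x ≤ C) (n : ℕ) :
    ∀ᵐ x ∂μ, -C ≤ birkhoffSum T g n x := by
  set M : α → ℝ := fun x => ⨆ k, birkhoffSum T g k x
  have hbdd (x : α) : BddAbove (Set.range fun k => birkhoffSum T g k x) :=
    ⟨C, Set.forall_mem_range.2 (hC · x)⟩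
  have hM_nonneg (x : α) : 0 ≤ M x := birkhoffSum_zero T g x ▸ le_ciSup (hbdd x) 0
  have hM_le (x : α) : M x ≤ C := ciSup_le (hC · x)
  have hM : Integrable M μ := by
    refine .of_bound (AEMeasurable.iSup fun k => (integrable_birkhoffSum hT hg k).aemeasurable
      ).aestronglyMeasurable C (ae_of_all _ fun x => ?_)
    rw [Real.norm_of_nonneg (hM_nonneg x)]
    exact hM_le x
  have hMn : Integrable (fun x => M (T^[n] x)) μ := (hT.iterate n).integrable_comp_of_integrable hM
  have hcocycle (x : α) : birkhoffSum T g n x + M (T^[n] x) ≤ M x := by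
    rw [← le_sub_iff_add_le']
    refine ciSup_le fun k => ?_
    rw [le_sub_iff_add_le', ← birkhoffSum_add]
    exact le_ciSup (hbdd x) (n + k)
  have heq : (fun x => birkhoffSum T g n x + M (T^[n] x)) =ᵐ[μ] M := by
    refine (integral_eq_iff_of_ae_le (f := fun x => birkhoffSum T g n x + M (T^[n] x))
      ((integrable_birkhoffSum hT hg n).add hMn) hM
      (ae_of_all _ hcocycle)).1 ?_
    rw [integral_add (integrable_birkhoffSum hT hg n) hMn, integral_birkhoffSum hT hg, hg0,
      (hT.iterate n).integral_comp_of_aestronglyMeasurable_s2 hM.aestronglyMeasurable]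
    ring
  filter_upwards [heq] with x hx
  linarith [hM_nonneg x, hM_le (T^[n] x)]

end MeasureTheory.MeasurePreserving

/-- subordination principle: if `γ(φ) < ∞`, `μ` maximizes `φ`
and `supp ν ⊆ supp μ`, then `ν` also maximizes `φ`. -/
theorem stmt2 {X : Type*} [MetricSpace X] [CompactSpace X]
    [MeasurableSpace X] [BorelSpace X]
    (T : X → X) (hT : Continuous T)
    (φ : X → ℝ) (hφ : Continuous φ)
    (γ : ℝ)
    (hγ : ∀ n : ℕ, 1 ≤ n → ∀ x : X,
      ∑ k ∈ Finset.range n, φ (T^[k] x) - n * beta T φ ≤ γ)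
    (μ : Measure X) (hμp : IsProbabilityMeasure μ) (hμinv : μ.map T = μ)
    (hμmax : ∫ x, φ x ∂μ = beta T φ)
    (ν : Measure X) (hνp : IsProbabilityMeasure ν) (hνinv : ν.map T = ν)
    (hsupp : msupp ν ⊆ msupp μ) :
    ∫ x, φ x ∂ν = beta T φ := by
  have hμT : MeasurePreserving T μ μ := ⟨hT.measurable, hμinv⟩
  have hνT : MeasurePreserving T ν ν := ⟨hT.measurable, hνinv⟩
  set g : X → ℝ := fun x => φ x - beta T φ
  have hg : Continuous g := hφ.sub continuous_const
  have hgi (ρ : Measure X) [IsFiniteMeasure ρ] : Integrable g ρ :=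
    hg.integrable_of_hasCompactSupport (.of_compactSpace g)
  have hint (ρ : Measure X) [IsProbabilityMeasure ρ] :
      ∫ x, g x ∂ρ = ∫ x, φ x ∂ρ - beta T φ := by
    simp [g, integral_sub (hφ.integrable_of_hasCompactSupport (.of_compactSpace φ))
      (integrable_const _)]
  have hupper (n : ℕ) (hn : 1 ≤ n) (x : X) : birkhoffSum T g n x ≤ γ := by
    simpa [g, birkhoffSum, Finset.sum_sub_distrib] using hγ n hn x
  have hC (k : ℕ) (x : X) : birkhoffSum T g k x ≤ max γ 0 := by
    rcases Nat.eq_zero_or_pos k with rfl | hk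
    · simp [birkhoffSum_zero]
    · exact (hupper k hk x).trans (le_max_left _ _)
  have hlower (n : ℕ) : ∀ᵐ x ∂ν, -max γ 0 ≤ birkhoffSum T g n x := by
    rw [msupp_eq_support, msupp_eq_support] at hsupp
    exact Measure.ae_mem_of_support_subset hsupp
      (isClosed_le continuous_const (continuous_birkhoffSum hT hg n))
      (hμT.ae_neg_le_birkhoffSum (hgi μ) (by rw [hint, hμmax, sub_self]) hC n)
  rw [← sub_eq_zero, ← hint ν]
  refine eq_zero_of_forall_nat_mul_mem_Icc (a := -max γ 0) (b := γ) fun n hn => ?_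
  rw [← hνT.integral_birkhoffSum (hgi ν) n]
  refine (convex_Icc _ _).integral_mem isClosed_Icc ?_ (hνT.integrable_birkhoffSum (hgi ν) n)
  filter_upwards [hlower n] with x hx using ⟨hx, hupper n hn x⟩
end

section
/- Let X be a compact metric space, T : X → X continuous, O a periodic orbit of T, p = #O, and μ the averaged Dirac measure (1/p) Σ_{y∈O} δ_y. Then there exists C ≥ 1 such that for every x ∈ X there exists y ∈ O with Σ_{k=0}^{p-1} dist(T^k x, T^k y) ≤ C · Σ_{k=0}^{p-1} dist(T^k x, O). -/
open MeasureTheory Metric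

/-- orbit shadowing estimate: there is `C ≥ 1` such that every
`x` admits a point `y` of the periodic orbit `O` with
`Σ_{k<p} dist(T^k x, T^k y) ≤ C · Σ_{k<p} dist(T^k x, O)`. -/
theorem stmt3 {X : Type*} [MetricSpace X] [CompactSpace X]
    (T : X → X) (hT : Continuous T)
    (y₀ : X) (p : ℕ) (hp : 0 < p) (hper : T^[p] y₀ = y₀)
    (O : Set X) (hO : O = (fun k => T^[k] y₀) '' Set.Iio p) :
    ∃ C : ℝ, 1 ≤ C ∧ ∀ x : X, ∃ y ∈ O,
      ∑ k ∈ Finset.range p, dist (T^[k] x) (T^[k] y) ≤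
        C * ∑ k ∈ Finset.range p, infDist (T^[k] x) O := by
  classical
  have hOfin : O.Finite := by rw [hO]; exact (Set.finite_Iio p).image _
  have hy₀O : y₀ ∈ O := by rw [hO]; exact ⟨0, hp, rfl⟩
  have hOne : O.Nonempty := ⟨y₀, hy₀O⟩
  have hOcomp : IsCompact O := hOfin.isCompact
  have hper' : Function.IsPeriodicPt T p y₀ := hper
  have hinv : ∀ (k : ℕ), ∀ z ∈ O, T^[k] z ∈ O := by
    intro k z hz
    rw [hO] at hz ⊢
    obtain ⟨j, hj, rfl⟩ := hz
    refine ⟨(k + j) % p, Nat.mod_lt _ hp, ?_⟩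
    rw [← Function.iterate_add_apply]
    exact hper'.iterate_mod_apply (k + j)
  -- diameter bound
  set D := Metric.diam O with hD
  have hDnn : 0 ≤ D := Metric.diam_nonneg
  have hDle : ∀ z ∈ O, ∀ w ∈ O, dist z w ≤ D :=
    fun z hz w hw => Metric.dist_le_diam_of_mem hOcomp.isBounded hz hw
  -- separation constant
  obtain ⟨ε, hε, hsep⟩ : ∃ ε > 0, ∀ z ∈ O, ∀ w ∈ O, dist z w < 2 * ε → z = w := by
    set F := hOfin.toFinset with hF
    set s : Finset ℝ := ((F ×ˢ F).filter (fun q => q.1 ≠ q.2)).image (fun q => dist q.1 q.2)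
      with hs'
    by_cases hs : s.Nonempty
    · obtain ⟨m, hms, hmle⟩ := s.exists_min_image id hs
      have hm : 0 < m := by
        obtain ⟨q, hq, hq'⟩ := Finset.mem_image.mp hms
        rw [Finset.mem_filter] at hq
        have : 0 < dist q.1 q.2 := dist_pos.mpr hq.2
        rw [hq'] at this
        exact this
      refine ⟨m / 3, by linarith, ?_⟩
      intro z hz w hw hd
      by_contra hne
      have hmem : dist z w ∈ s := by
        rw [hs', Finset.mem_image]
        exact ⟨(z, w), Finset.mem_filter.mpr ⟨Finset.mem_product.mpr
          ⟨hOfin.mem_toFinset.mpr hz, hOfin.mem_toFinset.mpr hw⟩, hne⟩, rfl⟩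
      have := hmle _ hmem
      simp only [id] at this
      linarith
    · refine ⟨1, one_pos, fun z hz w hw hd => ?_⟩
      by_contra hne
      exact hs ⟨dist z w, Finset.mem_image.mpr ⟨(z, w), Finset.mem_filter.mpr
        ⟨Finset.mem_product.mpr ⟨hOfin.mem_toFinset.mpr hz, hOfin.mem_toFinset.mpr hw⟩, hne⟩,
        rfl⟩⟩
  -- uniform continuity constant
  obtain ⟨δ, hδ, hδ'⟩ : ∃ δ > 0, ∀ a b : X, dist a b < δ →
      ∀ k < p, dist (T^[k] a) (T^[k] b) < ε := by
    have hG : Continuous (fun a (k : Fin p) => T^[k] a) :=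
      continuous_pi fun k => hT.iterate k
    have hUC := CompactSpace.uniformContinuous_of_continuous hG
    rw [Metric.uniformContinuous_iff] at hUC
    obtain ⟨δ, hδ, h⟩ := hUC ε hε
    exact ⟨δ, hδ, fun a b hab k hk =>
      lt_of_le_of_lt (dist_le_pi_dist (fun k : Fin p => T^[k] a)
        (fun k : Fin p => T^[k] b) ⟨k, hk⟩) (h hab)⟩
  refine ⟨1 + p * D / δ, le_add_of_nonneg_right (by positivity), fun x => ?_⟩
  obtain ⟨y, hyO, hxy⟩ := hOcomp.exists_infDist_eq_dist hOne x
  set S := ∑ k ∈ Finset.range p, infDist (T^[k] x) O with hS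
  have hSnn : 0 ≤ S := Finset.sum_nonneg fun k _ => infDist_nonneg
  by_cases hcase : dist x y < δ
  · refine ⟨y, hyO, ?_⟩
    have hsum : ∑ k ∈ Finset.range p, dist (T^[k] x) (T^[k] y) ≤ S := by
      apply Finset.sum_le_sum
      intro k hk
      rw [Finset.mem_range] at hk
      obtain ⟨z, hzO, hz⟩ := hOcomp.exists_infDist_eq_dist hOne (T^[k] x)
      have h1 : dist (T^[k] x) (T^[k] y) < ε := hδ' x y hcase k hk
      have h2 : dist (T^[k] x) z ≤ dist (T^[k] x) (T^[k] y) := by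
        rw [← hz]; exact infDist_le_dist_of_mem (hinv k y hyO)
      have h3 : dist z (T^[k] y) < 2 * ε := by
        calc dist z (T^[k] y) ≤ dist z (T^[k] x) + dist (T^[k] x) (T^[k] y) :=
              dist_triangle _ _ _
          _ < ε + ε := by
              rw [dist_comm z (T^[k] x)]
              exact add_lt_add (lt_of_le_of_lt h2 h1) h1
          _ = 2 * ε := by ring
      have hzy := hsep z hzO (T^[k] y) (hinv k y hyO) h3
      rw [← hzy, hz]
    calc ∑ k ∈ Finset.range p, dist (T^[k] x) (T^[k] y) ≤ S := hsum
      _ = 1 * S := (one_mul S).symm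
      _ ≤ (1 + p * D / δ) * S := by
          apply mul_le_mul_of_nonneg_right _ hSnn
          have : 0 ≤ (p : ℝ) * D / δ := by positivity
          linarith
  · refine ⟨y, hyO, ?_⟩
    push_neg at hcase
    have hSδ : δ ≤ S := by
      have h0 : infDist (T^[0] x) O = dist x y := by
        simpa using hxy
      calc δ ≤ dist x y := hcase
        _ = infDist (T^[0] x) O := h0.symm
        _ ≤ S := Finset.single_le_sum (f := fun k => infDist (T^[k] x) O)
              (fun k _ => infDist_nonneg) (Finset.mem_range.mpr hp)
    have hsum : ∑ k ∈ Finset.range p, dist (T^[k] x) (T^[k] y) ≤ S + p * D := by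
      have : ∀ k ∈ Finset.range p,
          dist (T^[k] x) (T^[k] y) ≤ infDist (T^[k] x) O + D := by
        intro k hk
        obtain ⟨z, hzO, hz⟩ := hOcomp.exists_infDist_eq_dist hOne (T^[k] x)
        calc dist (T^[k] x) (T^[k] y) ≤ dist (T^[k] x) z + dist z (T^[k] y) :=
              dist_triangle _ _ _
          _ ≤ infDist (T^[k] x) O + D := by
              gcongr
              · rw [hz]
              · exact hDle z hzO _ (hinv k y hyO)
      calc ∑ k ∈ Finset.range p, dist (T^[k] x) (T^[k] y)
          ≤ ∑ k ∈ Finset.range p, (infDist (T^[k] x) O + D) :=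
            Finset.sum_le_sum this
        _ = S + p * D := by rw [Finset.sum_add_distrib, Finset.sum_const,
            Finset.card_range, nsmul_eq_mul]
    have hpd : (p : ℝ) * D ≤ (p * D / δ) * S := by
      have h1 : (p : ℝ) * D / δ * δ ≤ (p * D / δ) * S := by
        apply mul_le_mul_of_nonneg_left hSδ (by positivity)
      rwa [div_mul_cancel₀ _ (ne_of_gt hδ)] at h1
    calc ∑ k ∈ Finset.range p, dist (T^[k] x) (T^[k] y) ≤ S + p * D := hsum
      _ ≤ S + (p * D / δ) * S := by linarith
      _ = (1 + p * D / δ) * S := by ring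
end

section
/- Let X be a compact metric space, T : X → X continuous, O a periodic orbit of period p, μ the averaged Dirac measure on O, and C ≥ 1 the constant from the orbit-shadowing estimate (for every x there is y ∈ O with Σ_{k<p} dist(T^k x, T^k y) ≤ C Σ_{k<p} dist(T^k x, O)). Then for every Lipschitz ψ : X → ℝ and every x ∈ X, |Σ_{k=0}^{p-1} ψ(T^k x) - p ∫ ψ dμ| ≤ C · lip(ψ) · Σ_{k=0}^{p-1} dist(T^k x, O); consequently, for every T-invariant Borel probability measure ν, |∫ ψ dν - ∫ ψ dμ| ≤ C · lip(ψ) · ∫ dist(·, O) dν. -/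
open MeasureTheory Metric



lemma sum_shift_real (f : ℕ → ℝ) (p : ℕ)
    (hf : ∀ k, f (k + p) = f k) :
    ∀ j, ∑ k ∈ Finset.range p, f (k + j) = ∑ k ∈ Finset.range p, f k := by
  intro j
  induction j with
  | zero => simp
  | succ j ih =>
      have h2 : ∑ k ∈ Finset.range (p+1), f (k + j) =
          ∑ k ∈ Finset.range p, f ((k+1) + j) + f (0 + j) := Finset.sum_range_succ' _ _
      have h3 : ∑ k ∈ Finset.range (p+1), f (k + j) =
          ∑ k ∈ Finset.range p, f (k + j) + f (p + j) := Finset.sum_range_succ _ _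
      have h4 : f (p + j) = f (0 + j) := by rw [Nat.add_comm p j, hf j]; simp
      have h5 : ∑ k ∈ Finset.range p, f ((k+1) + j) = ∑ k ∈ Finset.range p, f (k + j) := by
        have := h2.symm.trans h3
        rw [h4] at this
        linarith
      calc ∑ k ∈ Finset.range p, f (k + (j+1))
          = ∑ k ∈ Finset.range p, f ((k+1) + j) := by
            apply Finset.sum_congr rfl; intro k _; ring_nf
        _ = ∑ k ∈ Finset.range p, f (k + j) := h5
        _ = ∑ k ∈ Finset.range p, f k := ih

lemma integrable_of_cont {X : Type*} [MetricSpace X] [CompactSpace X]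
    [MeasurableSpace X] [BorelSpace X] {f : X → ℝ} (hf : Continuous f)
    (ν : Measure X) [IsFiniteMeasure ν] : Integrable f ν := by
  rw [← integrableOn_univ]
  exact hf.continuousOn.integrableOn_compact isCompact_univ

/-- the averaged Dirac measure on the orbit segment `y, Ty, …, T^{p-1}y` -/
noncomputable def orbMeas {X : Type*} [MeasurableSpace X] (T : X → X) (y : X) (p : ℕ) :
    Measure X :=
  (p : ENNReal)⁻¹ • ∑ k ∈ Finset.range p, Measure.dirac (T^[k] y)

/-- Birkhoff sums of a Lipschitz function along any point are
controlled, up to `C·lip(ψ)·Σ dist(T^k x, O)`, by the orbit average; and the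
integrated version for invariant measures. -/
theorem stmt4 {X : Type*} [MetricSpace X] [CompactSpace X]
    [MeasurableSpace X] [BorelSpace X]
    (T : X → X) (hT : Continuous T)
    (y₀ : X) (p : ℕ) (hp : 0 < p) (hper : T^[p] y₀ = y₀)
    (O : Set X) (hO : O = (fun k => T^[k] y₀) '' Set.Iio p)
    (C : ℝ) (hC : 1 ≤ C)
    (hshadow : ∀ x : X, ∃ y ∈ O,
      ∑ k ∈ Finset.range p, dist (T^[k] x) (T^[k] y) ≤
        C * ∑ k ∈ Finset.range p, infDist (T^[k] x) O) :
    ∀ (ψ : X → ℝ) (K : NNReal), LipschitzWith K ψ →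
      (∀ x : X,
        |∑ k ∈ Finset.range p, ψ (T^[k] x) - p * ∫ z, ψ z ∂(orbMeas T y₀ p)| ≤
          C * K * ∑ k ∈ Finset.range p, infDist (T^[k] x) O) ∧
      (∀ ν : Measure X, IsProbabilityMeasure ν → ν.map T = ν →
        |∫ z, ψ z ∂ν - ∫ z, ψ z ∂(orbMeas T y₀ p)| ≤
          C * K * ∫ z, infDist z O ∂ν) := by
  intro ψ K hψ
  have hψc : Continuous ψ := hψ.continuous
  -- the integral against orbMeas
  have hint : ∫ z, ψ z ∂(orbMeas T y₀ p) = (p : ℝ)⁻¹ * ∑ k ∈ Finset.range p, ψ (T^[k] y₀) := by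
    unfold orbMeas
    rw [integral_smul_measure, integral_finset_sum_measure]
    · simp [integral_dirac, smul_eq_mul, ENNReal.toReal_inv]
    · intro k _
      exact integrable_of_cont hψc _
  have hpne : (p : ℝ) ≠ 0 := Nat.cast_ne_zero.mpr hp.ne'
  have hpint : (p : ℝ) * ∫ z, ψ z ∂(orbMeas T y₀ p) = ∑ k ∈ Finset.range p, ψ (T^[k] y₀) := by
    rw [hint]; field_simp
  -- periodicity of orbit values
  have hperk : ∀ k, T^[k + p] y₀ = T^[k] y₀ := by
    intro k; rw [Function.iterate_add_apply, hper]
  -- sum over shifted orbit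
  have horb : ∀ y ∈ O, ∑ k ∈ Finset.range p, ψ (T^[k] y) = ∑ k ∈ Finset.range p, ψ (T^[k] y₀) := by
    intro y hy
    rw [hO] at hy
    obtain ⟨j, _, rfl⟩ := hy
    have : ∀ k, ψ (T^[k] (T^[j] y₀)) = (fun m => ψ (T^[m] y₀)) (k + j) := by
      intro k; simp [← Function.iterate_add_apply]
    simp only [this]
    exact sum_shift_real (fun m => ψ (T^[m] y₀)) p (fun k => by simp [hperk k]) j
  have hCK : (0:ℝ) ≤ C * K := mul_nonneg (le_trans zero_le_one hC) K.coe_nonneg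
  -- pointwise bound
  have hpt : ∀ x : X,
      |∑ k ∈ Finset.range p, ψ (T^[k] x) - p * ∫ z, ψ z ∂(orbMeas T y₀ p)| ≤
        C * K * ∑ k ∈ Finset.range p, infDist (T^[k] x) O := by
    intro x
    obtain ⟨y, hy, hsh⟩ := hshadow x
    rw [hpint, ← horb y hy]
    calc |∑ k ∈ Finset.range p, ψ (T^[k] x) - ∑ k ∈ Finset.range p, ψ (T^[k] y)|
        = |∑ k ∈ Finset.range p, (ψ (T^[k] x) - ψ (T^[k] y))| := by rw [Finset.sum_sub_distrib]
      _ ≤ ∑ k ∈ Finset.range p, |ψ (T^[k] x) - ψ (T^[k] y)| := Finset.abs_sum_le_sum_abs _ _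
      _ ≤ ∑ k ∈ Finset.range p, (K : ℝ) * dist (T^[k] x) (T^[k] y) := by
          apply Finset.sum_le_sum
          intro k _
          have := hψ.dist_le_mul (T^[k] x) (T^[k] y)
          rwa [Real.dist_eq] at this
      _ = (K : ℝ) * ∑ k ∈ Finset.range p, dist (T^[k] x) (T^[k] y) := by
          rw [Finset.mul_sum]
      _ ≤ (K : ℝ) * (C * ∑ k ∈ Finset.range p, infDist (T^[k] x) O) :=
          mul_le_mul_of_nonneg_left hsh K.coe_nonneg
      _ = C * K * ∑ k ∈ Finset.range p, infDist (T^[k] x) O := by ring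
  refine ⟨hpt, ?_⟩
  -- integrated version
  intro ν hprob hinv
  have hTk : ∀ k : ℕ, Continuous (T^[k]) := fun k => hT.iterate k
  have hmapk : ∀ k : ℕ, ν.map (T^[k]) = ν := by
    intro k
    induction k with
    | zero => simp
    | succ k ih =>
        rw [Function.iterate_succ']
        rw [← Measure.map_map hT.measurable (hTk k).measurable, ih, hinv]
  have hcompk : ∀ (f : X → ℝ), Continuous f → ∀ k : ℕ, ∫ x, f (T^[k] x) ∂ν = ∫ x, f x ∂ν := by
    intro f hf k
    conv_rhs => rw [← hmapk k]
    rw [integral_map (hTk k).measurable.aemeasurable hf.aestronglyMeasurable]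
  set c := ∫ z, ψ z ∂(orbMeas T y₀ p) with hc
  have hdist_c : Continuous (fun z => infDist z O) := continuous_infDist_pt O
  have hF : Continuous (fun x => ∑ k ∈ Finset.range p, ψ (T^[k] x)) := by
    apply continuous_finset_sum
    intro k _
    exact hψc.comp (hTk k)
  have hG : Continuous (fun x => ∑ k ∈ Finset.range p, infDist (T^[k] x) O) := by
    apply continuous_finset_sum
    intro k _
    exact hdist_c.comp (hTk k)
  -- integral of Birkhoff sum
  have hintF : ∫ x, (∑ k ∈ Finset.range p, ψ (T^[k] x)) ∂ν = p * ∫ z, ψ z ∂ν := by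
    rw [integral_finset_sum]
    · rw [Finset.sum_congr rfl (fun k _ => hcompk ψ hψc k)]
      simp [Finset.sum_const]
    · intro k _
      exact integrable_of_cont (hψc.comp (hTk k)) ν
  have hintG : ∫ x, (∑ k ∈ Finset.range p, infDist (T^[k] x) O) ∂ν
      = p * ∫ z, infDist z O ∂ν := by
    rw [integral_finset_sum]
    · rw [Finset.sum_congr rfl (fun k _ => hcompk _ hdist_c k)]
      simp [Finset.sum_const]
    · intro k _
      exact integrable_of_cont (hdist_c.comp (hTk k)) ν
  have hintsub : ∫ x, (∑ k ∈ Finset.range p, ψ (T^[k] x) - p * c) ∂ν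
      = p * ∫ z, ψ z ∂ν - p * c := by
    rw [integral_sub (integrable_of_cont hF ν) (integrable_const _), hintF]
    simp [measure_univ]
  have habs : |p * ∫ z, ψ z ∂ν - p * c| ≤ C * K * (p * ∫ z, infDist z O ∂ν) := by
    rw [← hintsub]
    calc |∫ x, (∑ k ∈ Finset.range p, ψ (T^[k] x) - p * c) ∂ν|
        ≤ ∫ x, |∑ k ∈ Finset.range p, ψ (T^[k] x) - p * c| ∂ν :=
          by
            simpa [Real.norm_eq_abs] using
              norm_integral_le_integral_norm (μ := ν)
                (fun x => ∑ k ∈ Finset.range p, ψ (T^[k] x) - p * c)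
      _ ≤ ∫ x, C * K * ∑ k ∈ Finset.range p, infDist (T^[k] x) O ∂ν := by
          apply integral_mono
          · exact (integrable_of_cont (hF.sub continuous_const) ν).abs
          · exact (integrable_of_cont hG ν).const_mul _
          · intro x; exact hpt x
      _ = C * K * (p * ∫ z, infDist z O ∂ν) := by
          rw [integral_const_mul, hintG]
  have hppos : (0:ℝ) < p := Nat.cast_pos.mpr hp
  have : (p:ℝ) * |∫ z, ψ z ∂ν - c| ≤ (p:ℝ) * (C * K * ∫ z, infDist z O ∂ν) := by
    calc (p:ℝ) * |∫ z, ψ z ∂ν - c| = |p * ∫ z, ψ z ∂ν - p * c| := by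
          rw [← mul_sub, abs_mul, abs_of_pos hppos]
      _ ≤ C * K * (p * ∫ z, infDist z O ∂ν) := habs
      _ = (p:ℝ) * (C * K * ∫ z, infDist z O ∂ν) := by ring
  exact le_of_mul_le_mul_left this hppos
end

section
/- Let X be a compact metric space, T : X → X continuous, and suppose φ ∈ Lip(X) is maximized by a periodic orbit O (i.e., the averaged Dirac measure μ on O satisfies ∫ φ dμ = β(φ)). Then for every ε > 0 there exists δ > 0 such that for every Lipschitz ψ with lip(ψ) ≤ δ, the function φ - ε·dist(·, O) + ψ is uniquely maximized by O: for every T-invariant Borel probability measure ν ≠ μ, ∫ (φ - ε·dist(·,O) + ψ) dν < ∫ (φ - ε·dist(·,O) + ψ) dμ. -/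
/-
Write `μ` for the orbit measure and `d = dist(·, O)`. The key estimate is
`∫ ψ dν ≤ ∫ ψ dμ + C · lip(ψ) · ∫ d dν` for every invariant probability measure `ν`, with `C`
depending only on `T` and `O`. It comes from a coboundary: the function
`h = -(1/p) ∑_{n<p} S_n(ψ - ψ(y₀))` (with `S_n` the Birkhoff sums) satisfies
`h ∘ T - h = ψ - ∫ ψ dμ` on `O`. Freezing `h` to be constant on disjoint neighbourhoods of the orbit
points, continuity of `T` gives `r > 0` such that the equation still holds at points within
distance `r` of `O` up to an error `lip(ψ) · d`, while at distance `≥ r` everything is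
`O(lip(ψ)) ≤ O(lip(ψ)) · d / r`. Integrating against an invariant `ν` kills `h ∘ T - h`.

Applied to `±ψ`, the estimate shows that `∫ d dν = 0` forces `ν = μ`, since Lipschitz functions
determine Borel measures. So for `ν ≠ μ` we have `∫ d dν > 0`, and together with
`∫ φ dν ≤ β(φ) = ∫ φ dμ` and `lip(ψ) ≤ ε / (2C)` the penalty `ε ∫ d dν` beats the possible gain
`C · lip(ψ) · ∫ d dν`.
-/

open MeasureTheory Metric

open Function Filter Topology
open scoped NNReal

theorem MeasureTheory.ext_of_forall_lipschitz_integral_eq {Ω : Type*} [MeasurableSpace Ω]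
    [PseudoEMetricSpace Ω] [BorelSpace Ω] {μ ν : Measure Ω} [IsFiniteMeasure μ]
    [IsFiniteMeasure ν]
    (h : ∀ f : Ω → ℝ, (∃ C, ∀ x y, dist (f x) (f y) ≤ C) → (∃ K, LipschitzWith K f) →
      ∫ x, f x ∂μ = ∫ x, f x ∂ν) :
    μ = ν := by
  have closed_eq : ∀ F : Set Ω, IsClosed F → μ F = ν F := by
    intro F hF
    have hδ : ∀ n : ℕ, (0 : ℝ) < 1 / (n + 1) := fun n ↦ Nat.one_div_pos_of_nat
    have lim := fun (κ : Measure Ω) [IsFiniteMeasure κ] ↦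
      tendsto_integral_thickenedIndicator_of_isClosed κ hF hδ
        tendsto_one_div_add_atTop_nhds_zero_nat
    refine (measureReal_eq_measureReal_iff (measure_ne_top _ _) (measure_ne_top _ _)).1
      (tendsto_nhds_unique (lim μ) ((lim ν).congr fun n ↦ (h _ ⟨1, fun x y ↦ ?_⟩ ⟨_,
        lipschitzWith_thickenedIndicator (hδ n) F⟩).symm))
    have mem_Icc : ∀ z, (thickenedIndicator (hδ n) F z : ℝ) ∈ Set.Icc 0 1 := fun z ↦
      ⟨NNReal.coe_nonneg _, NNReal.coe_le_one.2 (thickenedIndicator_le_one (hδ n) F z)⟩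
    exact Real.dist_le_of_mem_Icc_01 (mem_Icc x) (mem_Icc y)
  exact ext_of_generate_finite _ (BorelSpace.measurable_eq.trans borel_eq_generateFrom_isClosed)
    isPiSystem_isClosed (fun F hF ↦ closed_eq F hF) (closed_eq _ isClosed_univ)

theorem Continuous.integrable_of_compactSpace {X E : Type*} [TopologicalSpace X] [CompactSpace X]
    [MeasurableSpace X] [OpensMeasurableSpace X] [NormedAddCommGroup E] {f : X → E}
    (hf : Continuous f) (μ : Measure X) [IsFiniteMeasure μ] : Integrable f μ :=
  hf.integrable_of_hasCompactSupport (.of_compactSpace f)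

section BirkhoffSum
variable {X G : Type*} [AddCommGroup G] {T : X → X}

theorem Function.IsPeriodicPt.birkhoffSum_apply {p : ℕ} {y : X} (hy : IsPeriodicPt T p y)
    (g : X → G) : birkhoffSum T g p (T y) = birkhoffSum T g p y := by
  rw [← sub_eq_zero, birkhoffSum_apply_sub_birkhoffSum, hy.eq, sub_self]

theorem Function.IsPeriodicPt.birkhoffSum_iterate_apply {p : ℕ} {y : X}
    (hy : IsPeriodicPt T p y) (g : X → G) (k : ℕ) :
    birkhoffSum T g p (T^[k] y) = birkhoffSum T g p y := by
  induction k with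
  | zero => rfl
  | succ k ih => rw [iterate_succ_apply', (hy.apply_iterate k).birkhoffSum_apply, ih]

theorem sum_birkhoffSum_apply_sub_sum_birkhoffSum (g : X → G) (p : ℕ) (y : X) :
    ∑ n ∈ Finset.range p, birkhoffSum T g n (T y) - ∑ n ∈ Finset.range p, birkhoffSum T g n y =
      birkhoffSum T g p y - p • g y := by
  simp only [← Finset.sum_sub_distrib, birkhoffSum_apply_sub_birkhoffSum]
  rw [Finset.sum_sub_distrib, Finset.sum_const, Finset.card_range]
  rfl

end BirkhoffSum

theorem abs_birkhoffSum_le {X : Type*} {T : X → X} {g : X → ℝ} {M : ℝ} {y : X} {n : ℕ}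
    (hg : ∀ k < n, |g (T^[k] y)| ≤ M) : |birkhoffSum T g n y| ≤ n * M := by
  refine (Finset.abs_sum_le_sum_abs _ _).trans ?_
  simpa using Finset.sum_le_card_nsmul _ _ M fun k hk ↦ hg k (Finset.mem_range.1 hk)

theorem abs_sum_birkhoffSum_le {X : Type*} {T : X → X} {g : X → ℝ} {M : ℝ} {y : X} (hM : 0 ≤ M)
    (hg : ∀ k, |g (T^[k] y)| ≤ M) (p : ℕ) :
    |∑ n ∈ Finset.range p, birkhoffSum T g n y| ≤ p * (p * M) := by
  refine (Finset.abs_sum_le_sum_abs _ _).trans ?_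
  simpa using Finset.sum_le_card_nsmul _ _ (p * M) fun n hn ↦
    (abs_birkhoffSum_le fun k _ ↦ hg k).trans
      (mul_le_mul_of_nonneg_right (Nat.cast_le.2 (Finset.mem_range.1 hn).le) hM)

theorem Set.Finite.exists_pos_forall_ball_subset {X : Type*} [PseudoMetricSpace X] {s : Set X}
    (hs : s.Finite) {W : X → Set X} (hW : ∀ y ∈ s, W y ∈ 𝓝 y) :
    ∃ r > 0, ∀ y ∈ s, ball y r ⊆ W y := by
  have : ∀ᶠ r in 𝓝[>] (0 : ℝ), ∀ y ∈ s, ball y r ⊆ W y := by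
    refine hs.eventually_all.2 fun y hy ↦ ?_
    obtain ⟨ε, hε, hball⟩ := Metric.mem_nhds_iff.1 (hW y hy)
    filter_upwards [nhdsWithin_le_nhds (gt_mem_nhds hε)] with r hr
    exact (ball_subset_ball hr.le).trans hball
  exact (this.and self_mem_nhdsWithin).exists.imp fun r hr ↦ ⟨hr.2, hr.1⟩

theorem Set.Finite.exists_pairwiseDisjoint_isOpen_of_continuous {X : Type*} [MetricSpace X]
    {T : X → X} (hT : Continuous T) {s : Set X} (hs : s.Finite) :
    ∃ U : X → Set X, (∀ y, IsOpen (U y)) ∧ s.PairwiseDisjoint U ∧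
      ∃ r > 0, ∀ y ∈ s, ∀ z, dist z y < r → z ∈ U y ∧ T z ∈ U (T y) := by
  obtain ⟨U, hU, hdisj⟩ := hs.t2_separation
  have hnhds : ∀ y ∈ s, U y ∩ T ⁻¹' U (T y) ∈ 𝓝 y := fun y _ ↦
    inter_mem ((hU y).2.mem_nhds (hU y).1)
      (hT.continuousAt.preimage_mem_nhds ((hU (T y)).2.mem_nhds (hU (T y)).1))
  obtain ⟨r, hr, hball⟩ := hs.exists_pos_forall_ball_subset hnhds
  exact ⟨U, fun y ↦ (hU y).2, hdisj, r, hr, fun y hy z hz ↦ hball y hy (mem_ball.2 hz)⟩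

theorem Set.Finite.exists_measurable_eq_on {X : Type*} [TopologicalSpace X] [MeasurableSpace X]
    [OpensMeasurableSpace X] {s : Set X} (hs : s.Finite) {U : X → Set X} (hU : ∀ y, IsOpen (U y))
    (hdisj : s.PairwiseDisjoint U) (c : X → ℝ) {B : ℝ} (hB : 0 ≤ B)
    (hcB : ∀ y ∈ s, |c y| ≤ B) :
    ∃ h : X → ℝ, Measurable h ∧ (∀ y ∈ s, ∀ z ∈ U y, h z = c y) ∧ ∀ z, |h z| ≤ B := by
  have eq_of_mem : ∀ y ∈ s, ∀ z ∈ U y,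
      ∑ y' ∈ hs.toFinset, (U y').indicator (fun _ ↦ c y') z = c y := by
    intro y hy z hz
    rw [Finset.sum_eq_single y, Set.indicator_of_mem hz]
    · intro y' hy' hne
      exact Set.indicator_of_notMem
        (Set.disjoint_left.1 (hdisj (hs.mem_toFinset.1 hy') hy hne).symm hz) _
    · exact fun hy' ↦ absurd (hs.mem_toFinset.2 hy) hy'
  refine ⟨fun z ↦ ∑ y ∈ hs.toFinset, (U y).indicator (fun _ ↦ c y) z, ?_, eq_of_mem, fun z ↦ ?_⟩
  · exact Finset.measurable_sum _ fun y _ ↦ measurable_const.indicator (hU y).measurableSet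
  · dsimp only
    by_cases hz : ∃ y ∈ s, z ∈ U y
    · obtain ⟨y, hy, hzy⟩ := hz
      rw [eq_of_mem y hy z hzy]
      exact hcB y hy
    · simp only [not_exists, not_and] at hz
      rw [Finset.sum_eq_zero fun y hy ↦ Set.indicator_of_notMem (hz y (hs.mem_toFinset.1 hy)) _,
        abs_zero]
      exact hB

def periodicOrbitSet {X : Type*} (T : X → X) (y : X) (p : ℕ) : Set X :=
  (fun k ↦ T^[k] y) '' Set.Iio p

section PeriodicOrbit
variable {X : Type*} {T : X → X} {y₀ : X} {p : ℕ}

theorem finite_periodicOrbitSet : (periodicOrbitSet T y₀ p).Finite :=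
  (Set.finite_Iio p).image _

theorem iterate_mem_periodicOrbitSet (hp : 0 < p) (hper : IsPeriodicPt T p y₀) (k : ℕ) :
    T^[k] y₀ ∈ periodicOrbitSet T y₀ p :=
  ⟨k % p, Nat.mod_lt k hp, hper.iterate_mod_apply k⟩

theorem iterate_mem_periodicOrbitSet_of_mem (hp : 0 < p) (hper : IsPeriodicPt T p y₀) {y : X}
    (hy : y ∈ periodicOrbitSet T y₀ p) (k : ℕ) : T^[k] y ∈ periodicOrbitSet T y₀ p := by
  obtain ⟨j, -, rfl⟩ := hy
  rw [← iterate_add_apply]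
  exact iterate_mem_periodicOrbitSet hp hper _

theorem birkhoffSum_eq_of_mem_periodicOrbitSet {G : Type*} [AddCommGroup G]
    (hper : IsPeriodicPt T p y₀) {y : X} (hy : y ∈ periodicOrbitSet T y₀ p) (g : X → G) :
    birkhoffSum T g p y = birkhoffSum T g p y₀ := by
  obtain ⟨k, -, rfl⟩ := hy
  exact hper.birkhoffSum_iterate_apply g k

variable [MeasurableSpace X]

theorem isProbabilityMeasure_orbMeas (hp : 0 < p) : IsProbabilityMeasure (orbMeas T y₀ p) := by
  constructor
  simp [orbMeas, ENNReal.inv_mul_cancel, hp.ne']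

variable [MeasurableSingletonClass X]

theorem integral_orbMeas (f : X → ℝ) :
    ∫ x, f x ∂(orbMeas T y₀ p) = birkhoffAverage ℝ T f p y₀ := by
  rw [orbMeas, integral_smul_measure,
    integral_finsetSum_measure fun k _ ↦ integrable_dirac enorm_lt_top]
  simp [integral_dirac, birkhoffAverage, birkhoffSum]

theorem integral_infDist_periodicOrbitSet_orbMeas [PseudoMetricSpace X] (hp : 0 < p)
    (hper : IsPeriodicPt T p y₀) :
    ∫ x, infDist x (periodicOrbitSet T y₀ p) ∂(orbMeas T y₀ p) = 0 := by
  simp [integral_orbMeas, birkhoffAverage, birkhoffSum,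
    infDist_zero_of_mem (iterate_mem_periodicOrbitSet hp hper _)]

end PeriodicOrbit

section Coboundary
variable {X : Type*} [MetricSpace X] [MeasurableSpace X] [OpensMeasurableSpace X] {T : X → X}
  {y₀ : X} {p : ℕ}

theorem exists_coboundary_near_periodicOrbitSet (hT : Continuous T) (hp : 0 < p)
    (hper : IsPeriodicPt T p y₀) :
    ∃ r > 0, ∀ (g : X → ℝ) (M : ℝ), (∀ y ∈ periodicOrbitSet T y₀ p, |g y - g y₀| ≤ M) →
      ∃ h : X → ℝ, Measurable h ∧ (∀ z, |h z| ≤ p * M) ∧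
        ∀ y ∈ periodicOrbitSet T y₀ p, ∀ z, dist z y < r →
          h (T z) - h z = g y - birkhoffAverage ℝ T g p y₀ := by
  set O := periodicOrbitSet T y₀ p
  have mem_O : ∀ {y}, y ∈ O → ∀ k, T^[k] y ∈ O := iterate_mem_periodicOrbitSet_of_mem hp hper
  obtain ⟨U, hU, hdisj, r, hr, hnear⟩ :=
    finite_periodicOrbitSet.exists_pairwiseDisjoint_isOpen_of_continuous hT
  refine ⟨r, hr, fun g M hM ↦ ?_⟩
  set g₀ : X → ℝ := fun z ↦ g z - g y₀
  set c : X → ℝ := fun y ↦ -(p : ℝ)⁻¹ * ∑ n ∈ Finset.range p, birkhoffSum T g₀ n y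
  have hp' : (0 : ℝ) < p := Nat.cast_pos.2 hp
  have hM0 : 0 ≤ M := (abs_nonneg _).trans (hM y₀ (iterate_mem_periodicOrbitSet hp hper 0))
  have hc : ∀ y ∈ O, |c y| ≤ p * M := by
    intro y hy
    rw [abs_mul, abs_neg, abs_inv, Nat.abs_cast, inv_mul_le_iff₀ hp']
    exact abs_sum_birkhoffSum_le hM0 (fun k ↦ hM _ (mem_O hy k)) p
  obtain ⟨h, hmeas, heq, hbound⟩ :=
    finite_periodicOrbitSet.exists_measurable_eq_on hU hdisj c (by positivity) hc
  refine ⟨h, hmeas, hbound, fun y hy z hz ↦ ?_⟩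
  obtain ⟨hzU, hTzU⟩ := hnear y hy z hz
  rw [heq _ (by simpa using mem_O hy 1) _ hTzU, heq y hy z hzU]
  have hcob := sum_birkhoffSum_apply_sub_sum_birkhoffSum (T := T) g₀ p y
  have hsum₀ : birkhoffSum T g₀ p y = birkhoffSum T g p y₀ - p * g y₀ := by
    rw [birkhoffSum_eq_of_mem_periodicOrbitSet hper hy]
    simp [g₀, birkhoffSum, Finset.sum_sub_distrib]
  have hg₀ : g₀ y = g y - g y₀ := rfl
  rw [hsum₀, nsmul_eq_mul, hg₀] at hcob
  calc c (T y) - c y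
      = -(p : ℝ)⁻¹ * (∑ n ∈ Finset.range p, birkhoffSum T g₀ n (T y)
          - ∑ n ∈ Finset.range p, birkhoffSum T g₀ n y) := by ring
    _ = g y - birkhoffAverage ℝ T g p y₀ := by
      rw [hcob, birkhoffAverage, smul_eq_mul]
      field_simp
      ring

theorem exists_le_coboundary_add_infDist_periodicOrbitSet (hT : Continuous T) (hp : 0 < p)
    (hper : IsPeriodicPt T p y₀) :
    ∃ C > 0, ∀ (ψ : X → ℝ) (K : ℝ≥0), LipschitzWith K ψ →
      ∃ h : X → ℝ, Measurable h ∧ (∃ B, ∀ z, |h z| ≤ B) ∧ ∀ z, ψ z ≤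
        birkhoffAverage ℝ T ψ p y₀ + (h (T z) - h z) +
          C * K * infDist z (periodicOrbitSet T y₀ p) := by
  set O := periodicOrbitSet T y₀ p
  have hy₀ : y₀ ∈ O := iterate_mem_periodicOrbitSet hp hper 0
  obtain ⟨r, hr, hcob⟩ := exists_coboundary_near_periodicOrbitSet hT hp hper
  set D := diam O
  have hD : ∀ y ∈ O, ∀ y' ∈ O, dist y y' ≤ D := fun y hy y' hy' ↦
    dist_le_diam_of_mem finite_periodicOrbitSet.isBounded hy hy'
  have hD0 : 0 ≤ D := diam_nonneg
  refine ⟨1 + (1 + 4 * p) * D / r, by positivity, fun ψ K hψ ↦ ?_⟩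
  have hψ_le : ∀ z w, ψ z - ψ w ≤ K * dist z w := fun z w ↦
    (le_abs_self _).trans (by simpa [Real.dist_eq] using hψ.dist_le_mul z w)
  have hψ_orbit : ∀ y ∈ O, ψ y - ψ y₀ ≤ K * D := fun y hy ↦
    (hψ_le y y₀).trans (by gcongr; exact hD y hy y₀ hy₀)
  obtain ⟨h, hmeas, hbound, heq⟩ := hcob ψ (K * D) fun y hy ↦ abs_sub_le_iff.2
    ⟨hψ_orbit y hy, (hψ_le y₀ y).trans (by gcongr; exact hD y₀ hy₀ y hy)⟩
  refine ⟨h, hmeas, ⟨_, hbound⟩, fun z ↦ ?_⟩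
  obtain ⟨y, hy, hzy⟩ : ∃ y ∈ O, infDist z O = dist z y :=
    finite_periodicOrbitSet.isCompact.exists_infDist_eq_dist ⟨y₀, hy₀⟩ z
  rw [hzy]
  have hKd : (K : ℝ) * dist z y ≤ (1 + (1 + 4 * p) * D / r) * K * dist z y := by
    rw [mul_assoc]
    exact le_mul_of_one_le_left (by positivity) (le_add_of_nonneg_right (by positivity))
  rcases lt_or_ge (dist z y) r with hnear | hfar
  · linarith [heq y hy z hnear, hψ_le z y]
  · -- far from the orbit every term is `O(K)`, and `1 ≤ dist z y / r`
    have hy₀_cob := heq y₀ hy₀ y₀ (by simpa using hr)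
    have hfar' : (1 + 4 * p) * K * D ≤ (1 + 4 * p) * D / r * K * dist z y := by
      rw [show (1 + 4 * p) * D / r * K * dist z y = (1 + 4 * p) * K * D * (dist z y / r) by ring]
      exact le_mul_of_one_le_right (by positivity) ((one_le_div hr).2 hfar)
    linarith [hψ_le z y, hψ_orbit y hy, (abs_le.1 (hbound z)).2, (abs_le.1 (hbound (T z))).1,
      (abs_le.1 (hbound y₀)).1, (abs_le.1 (hbound (T y₀))).2]

end Coboundary

section CompactSpace
variable {X : Type*} [MetricSpace X] [CompactSpace X] [MeasurableSpace X] [BorelSpace X]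
  {T : X → X} {y₀ : X} {p : ℕ}

theorem integral_le_integral_orbMeas_add_integral_infDist (hT : Continuous T) (hp : 0 < p)
    (hper : IsPeriodicPt T p y₀) :
    ∃ C > 0, ∀ (ψ : X → ℝ) (K : ℝ≥0), LipschitzWith K ψ →
      ∀ (ν : Measure X) [IsProbabilityMeasure ν], ν.map T = ν →
        ∫ x, ψ x ∂ν ≤ ∫ x, ψ x ∂(orbMeas T y₀ p) +
          C * K * ∫ x, infDist x (periodicOrbitSet T y₀ p) ∂ν := by
  obtain ⟨C, hC, hcob⟩ := exists_le_coboundary_add_infDist_periodicOrbitSet hT hp hper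
  refine ⟨C, hC, fun ψ K hψ ν _ hν ↦ ?_⟩
  obtain ⟨h, hmeas, ⟨B, hB⟩, hle⟩ := hcob ψ K hψ
  have hint_h : Integrable h ν :=
    .of_bound hmeas.aestronglyMeasurable B (ae_of_all _ fun z ↦ by simpa using hB z)
  have hint_hT : Integrable (fun z ↦ h (T z)) ν := by
    rw [← hν] at hint_h
    exact hint_h.comp_measurable hT.measurable
  have hint_d := (continuous_infDist_pt (periodicOrbitSet T y₀ p)).integrable_of_compactSpace ν
  have h_inv : ∫ z, h (T z) ∂ν = ∫ z, h z ∂ν := by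
    conv_rhs => rw [← hν]
    exact (integral_map hT.aemeasurable (hν ▸ hmeas.aestronglyMeasurable)).symm
  calc ∫ x, ψ x ∂ν
      ≤ ∫ z, (birkhoffAverage ℝ T ψ p y₀ + (h (T z) - h z) +
          C * K * infDist z (periodicOrbitSet T y₀ p)) ∂ν :=
        integral_mono (hψ.continuous.integrable_of_compactSpace ν)
          (((integrable_const _).add (hint_hT.sub hint_h)).add (hint_d.const_mul _)) hle
    _ = _ := by
      rw [integral_add (by exact (integrable_const _).add (hint_hT.sub hint_h))
          (by exact hint_d.const_mul _),
        integral_add (integrable_const _) (by exact hint_hT.sub hint_h),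
        integral_sub hint_hT hint_h, h_inv, integral_const_mul, integral_orbMeas]
      simp

theorem eq_orbMeas_of_integral_infDist_eq_zero (hT : Continuous T) (hp : 0 < p)
    (hper : IsPeriodicPt T p y₀) (ν : Measure X) [IsProbabilityMeasure ν] (hν : ν.map T = ν)
    (h : ∫ x, infDist x (periodicOrbitSet T y₀ p) ∂ν = 0) : ν = orbMeas T y₀ p := by
  have := isProbabilityMeasure_orbMeas (T := T) (y₀ := y₀) hp
  obtain ⟨C, -, hshadow⟩ := integral_le_integral_orbMeas_add_integral_infDist hT hp hper
  refine ext_of_forall_lipschitz_integral_eq fun f _ ⟨K, hf⟩ ↦ le_antisymm ?_ ?_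
  · simpa [h] using hshadow f K hf ν hν
  · simpa [h, integral_neg] using hshadow (-f) K hf.neg ν hν

theorem integral_le_beta {φ : X → ℝ} (hφ : Continuous φ) (ν : Measure X) [IsProbabilityMeasure ν]
    (hν : ν.map T = ν) : ∫ x, φ x ∂ν ≤ beta T φ := by
  refine le_csSup ⟨⨆ x, φ x, ?_⟩ ⟨ν, ⟨‹_›, hν⟩, rfl⟩
  rintro _ ⟨κ, ⟨hκ, -⟩, rfl⟩
  calc ∫ x, φ x ∂κ ≤ ∫ _, ⨆ x, φ x ∂κ :=
        integral_mono (hφ.integrable_of_compactSpace κ) (integrable_const _)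
          fun x ↦ le_ciSup (isCompact_range hφ).bddAbove x
    _ = ⨆ x, φ x := by simp

theorem integral_sub_mul_add {φ g ψ : X → ℝ} (hφ : Continuous φ) (hg : Continuous g)
    (hψ : Continuous ψ) (ε : ℝ) (κ : Measure X) [IsFiniteMeasure κ] :
    ∫ x, (φ x - ε * g x + ψ x) ∂κ = ∫ x, φ x ∂κ - ε * ∫ x, g x ∂κ + ∫ x, ψ x ∂κ := by
  have hφg : Integrable (fun x ↦ φ x - ε * g x) κ :=
    (hφ.integrable_of_compactSpace κ).sub ((hg.integrable_of_compactSpace κ).const_mul ε)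
  rw [integral_add hφg (hψ.integrable_of_compactSpace κ),
    integral_sub (hφ.integrable_of_compactSpace κ) ((hg.integrable_of_compactSpace κ).const_mul ε),
    integral_const_mul]

end CompactSpace

/-- locking: if the Lipschitz function `φ` is maximized by the
periodic orbit `O`, then for every `ε > 0` there is `δ > 0` such that for all
Lipschitz `ψ` with `lip(ψ) ≤ δ`, the function `φ - ε·dist(·,O) + ψ` is uniquely
maximized by `O`. -/
theorem stmt5 {X : Type*} [MetricSpace X] [CompactSpace X]
    [MeasurableSpace X] [BorelSpace X]
    (T : X → X) (hT : Continuous T)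
    (φ : X → ℝ) (Kφ : NNReal) (hφ : LipschitzWith Kφ φ)
    (y₀ : X) (p : ℕ) (hp : 0 < p) (hper : T^[p] y₀ = y₀)
    (O : Set X) (hO : O = (fun k => T^[k] y₀) '' Set.Iio p)
    (hmax : ∫ x, φ x ∂(orbMeas T y₀ p) = beta T φ) :
    ∀ ε : ℝ, 0 < ε → ∃ δ : ℝ, 0 < δ ∧
      ∀ (ψ : X → ℝ) (Kψ : NNReal), LipschitzWith Kψ ψ → (Kψ : ℝ) ≤ δ →
        ∀ ν : Measure X, IsProbabilityMeasure ν → ν.map T = ν →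
          ν ≠ orbMeas T y₀ p →
          ∫ x, (φ x - ε * infDist x O + ψ x) ∂ν <
            ∫ x, (φ x - ε * infDist x O + ψ x) ∂(orbMeas T y₀ p) := by
  intro ε hε
  rw [show O = periodicOrbitSet T y₀ p from hO]
  obtain ⟨C, hC, hshadow⟩ := integral_le_integral_orbMeas_add_integral_infDist hT hp hper
  refine ⟨ε / (2 * C), by positivity, fun ψ Kψ hψ hKψ ν hν hνT hne ↦ ?_⟩
  have := isProbabilityMeasure_orbMeas (T := T) (y₀ := y₀) hp
  have hd := continuous_infDist_pt (periodicOrbitSet T y₀ p)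
  rw [integral_sub_mul_add hφ.continuous hd hψ.continuous,
    integral_sub_mul_add hφ.continuous hd hψ.continuous,
    integral_infDist_periodicOrbitSet_orbMeas hp hper]
  have hm : 0 < ∫ x, infDist x (periodicOrbitSet T y₀ p) ∂ν :=
    (integral_nonneg fun _ ↦ infDist_nonneg).lt_of_ne fun h ↦
      hne (eq_orbMeas_of_integral_infDist_eq_zero hT hp hper ν hνT h.symm)
  have hφ_le : ∫ x, φ x ∂ν ≤ ∫ x, φ x ∂(orbMeas T y₀ p) :=
    hmax ▸ integral_le_beta hφ.continuous ν hνT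
  have hψ_le := hshadow ψ Kψ hψ ν hνT
  have hCK : C * Kψ ≤ ε / 2 :=
    calc C * Kψ ≤ C * (ε / (2 * C)) := by gcongr
      _ = ε / 2 := by field_simp
  linarith [mul_le_mul_of_nonneg_right hCK hm.le, mul_pos hε hm]
end

section
/- Let X be a topological space, T : X → X a map, U ⊆ X open, and Λ := ∩_{n≥0} T^{-n}(U) nonempty. If the restriction T : U → X is an open map, then the restriction T : Λ → Λ (which is well-defined since T(Λ) ⊆ Λ) is an open map with respect to the subspace topology on Λ. -/
open Set

/-- if `T : U → X` is an open map and `Λ = ⋂ₙ T^{-n} U` is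
nonempty, then `T(Λ) ⊆ Λ` and `T : Λ → Λ` is open for the subspace topology. -/
theorem stmt7 {X : Type*} [TopologicalSpace X] (T : X → X)
    (U : Set X) (hU : IsOpen U)
    (Λ : Set X) (hΛ : Λ = ⋂ n : ℕ, T^[n] ⁻¹' U) (hne : Λ.Nonempty)
    (hopen : ∀ V : Set X, IsOpen V → V ⊆ U → IsOpen (T '' V)) :
    T '' Λ ⊆ Λ ∧
    ∀ V : Set X, IsOpen V → ∃ W : Set X, IsOpen W ∧ T '' (V ∩ Λ) = W ∩ Λ := by
  have hmemΛ : ∀ x, x ∈ Λ ↔ ∀ n : ℕ, T^[n] x ∈ U := by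
    intro x; rw [hΛ]; simp
  have hsub : ∀ x ∈ Λ, x ∈ U := fun x hx => (hmemΛ x).1 hx 0
  have hTΛ : T '' Λ ⊆ Λ := by
    rintro _ ⟨x, hx, rfl⟩
    rw [hmemΛ]
    intro n
    have := (hmemΛ x).1 hx (n + 1)
    rwa [Function.iterate_succ_apply] at this
  refine ⟨hTΛ, fun V hV => ?_⟩
  refine ⟨T '' (V ∩ U), hopen _ (hV.inter hU) inter_subset_right, ?_⟩
  ext y
  constructor
  · rintro ⟨x, ⟨hxV, hxΛ⟩, rfl⟩
    exact ⟨⟨x, ⟨hxV, hsub x hxΛ⟩, rfl⟩, hTΛ ⟨x, hxΛ, rfl⟩⟩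
  · rintro ⟨⟨x, ⟨hxV, hxU⟩, rfl⟩, hyΛ⟩
    refine ⟨x, ⟨hxV, ?_⟩, rfl⟩
    rw [hmemΛ]
    intro n
    cases n with
    | zero => exact hxU
    | succ n =>
      have := (hmemΛ (T x)).1 hyΛ n
      rwa [Function.iterate_succ_apply]
end

section
/- Let T : X → X be a continuous self-map of a compact metric space, and let φ ∈ Lip(X) with γ(φ) := sup_{n≥1,x∈X}(S_n φ(x) − n β(φ)) < +∞. Suppose x₀ ∈ supp μ for some maximizing measure μ of φ, and that there exist α ∈ ℝ and N ≥ 1 with S_N φ(x₀) − N β(φ) < α. Then α ≥ −γ(φ). Equivalently, inf_{n≥1, x ∈ supp μ} (S_n φ(x) − n β(φ)) ≥ −γ(φ). -/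
/-!
Put `g = φ - β(φ)`, so that `∫ g dμ = 0` and all Birkhoff sums of `g` are at most `γ`. If
`α < -γ`, the open set `A = {S_N g < α}` contains `x₀`, hence has positive `μ`-measure. Cut an
orbit segment of length `n` greedily at its first visits to `A` that leave room for a whole block
of length `N`: each such block contributes less than `α` and contains at most `N` visits, each gap
contributes at most `γ`, and at most `N` visits lie after the last block. Hence
`N S_n g ≤ (γ + α) #(visits to A before n) - N α`. Integrating against the invariant measure `μ`
gives `0 ≤ (γ + α) n μ(A) - N α`, false for large `n` since `γ + α < 0`.
-/

open MeasureTheory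

open Finset

theorem birkhoffSum_sub_const {α G : Type*} [AddCommGroup G] (f : α → α) (g : α → G) (c : G)
    (n : ℕ) (x : α) : birkhoffSum f (fun y => g y - c) n x = birkhoffSum f g n x - n • c := by
  simp [birkhoffSum, sum_sub_distrib]

theorem Continuous.birkhoffSum {α M : Type*} [TopologicalSpace α] [TopologicalSpace M]
    [AddCommMonoid M] [ContinuousAdd M] {f : α → α} (hf : Continuous f) {g : α → M}
    (hg : Continuous g) (n : ℕ) : Continuous (birkhoffSum f g n) :=
  continuous_finsetSum _ fun k _ => hg.comp (hf.iterate k)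

section

variable {α E : Type*} [MeasurableSpace α] {μ : Measure α} {f : α → α} [NormedAddCommGroup E]

theorem MeasureTheory.MeasurePreserving.integrable_birkhoffSum_s18
    (hf : MeasurePreserving f μ μ) {g : α → E} (hg : Integrable g μ) (n : ℕ) :
    Integrable (birkhoffSum f g n) μ :=
  integrable_finsetSum _ fun k _ => (hf.iterate k).integrable_comp_of_integrable hg

variable [NormedSpace ℝ E]

theorem MeasureTheory.MeasurePreserving.integral_comp_of_aestronglyMeasurable_s18
    (hf : MeasurePreserving f μ μ) {g : α → E} (hg : AEStronglyMeasurable g μ) :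
    ∫ x, g (f x) ∂μ = ∫ x, g x ∂μ := by
  have h := integral_map hf.measurable.aemeasurable (f := g) (by rwa [hf.map_eq])
  rw [hf.map_eq] at h
  exact h.symm

theorem MeasureTheory.MeasurePreserving.integral_birkhoffSum_s18
    (hf : MeasurePreserving f μ μ) {g : α → E} (hg : Integrable g μ) (n : ℕ) :
    ∫ x, birkhoffSum f g n x ∂μ = n • ∫ x, g x ∂μ := by
  unfold birkhoffSum
  rw [integral_finsetSum (f := fun k x => g (f^[k] x)) _ fun k _ =>
    (hf.iterate k).integrable_comp_of_integrable hg]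
  simp only [(hf.iterate _).integral_comp_of_aestronglyMeasurable_s18 hg.aestronglyMeasurable,
    sum_const, card_range]

end

section

variable {α : Type*} (f : α → α) (A : Set α)

theorem birkhoffSum_indicator_one_le (n : ℕ) (x : α) :
    birkhoffSum f (A.indicator 1) n x ≤ (n : ℝ) := by
  unfold birkhoffSum
  simpa using sum_le_card_nsmul (range n) (fun k => A.indicator (1 : α → ℝ) (f^[k] x)) 1
    fun k _ => Set.indicator_le_self' (fun _ _ => zero_le_one) _

theorem birkhoffSum_indicator_one_eq_zero {n : ℕ} {x : α} (h : ∀ k < n, f^[k] x ∉ A) :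
    birkhoffSum f (A.indicator (1 : α → ℝ)) n x = 0 :=
  sum_eq_zero fun k hk => Set.indicator_of_notMem (h k (mem_range.mp hk)) _

theorem birkhoffSum_indicator_one_le_of_no_early_visit {n N : ℕ} {x : α}
    (h : ∀ k, k + N ≤ n → f^[k] x ∉ A) :
    birkhoffSum f (A.indicator (1 : α → ℝ)) n x ≤ N := by
  have hn : n = n - N + (n - (n - N)) := by omega
  rw [hn, birkhoffSum_add, birkhoffSum_indicator_one_eq_zero f A fun k hk => h k (by omega),
    zero_add]
  exact (birkhoffSum_indicator_one_le f A _ _).trans (mod_cast (by omega : n - (n - N) ≤ N))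

theorem natCast_mul_birkhoffSum_le {g : α → ℝ} {γ a : ℝ} {N : ℕ} (hN : 0 < N)
    (hγ : ∀ n x, birkhoffSum f g n x ≤ γ) (hA : ∀ x ∈ A, birkhoffSum f g N x ≤ a)
    (hγa : γ + a ≤ 0) (n : ℕ) (x : α) :
    N * birkhoffSum f g n x ≤ (γ + a) * birkhoffSum f (A.indicator 1) n x - N * a := by
  classical
  induction n using Nat.strong_induction_on generalizing x with
  | _ n ih =>
    have hN0 : (0 : ℝ) ≤ N := N.cast_nonneg
    by_cases hvisit : ∃ t, t + N ≤ n ∧ f^[t] x ∈ A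
    · obtain ⟨htn, htA⟩ := Nat.find_spec hvisit
      set t := Nat.find hvisit
      obtain ⟨m, hm⟩ := Nat.exists_eq_add_of_le htn
      have hsplit (g' : α → ℝ) : birkhoffSum f g' n x = birkhoffSum f g' t x +
          birkhoffSum f g' N (f^[t] x) + birkhoffSum f g' m (f^[N] (f^[t] x)) := by
        rw [hm, add_assoc, birkhoffSum_add, birkhoffSum_add, add_assoc]
      have hbefore : birkhoffSum f (A.indicator (1 : α → ℝ)) t x = 0 :=
        birkhoffSum_indicator_one_eq_zero f A fun k hk hkA =>
          Nat.find_min hvisit hk ⟨by omega, hkA⟩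
      have hblock := birkhoffSum_indicator_one_le f A N (f^[t] x)
      have hrest := ih m (by omega) (f^[N] (f^[t] x))
      rw [hsplit, hsplit, hbefore]
      linarith [mul_le_mul_of_nonneg_left (hγ t x) hN0,
        mul_le_mul_of_nonneg_left (hA _ htA) hN0, mul_le_mul_of_nonpos_left hblock hγa]
    · simp only [not_exists, not_and] at hvisit
      have hcount := birkhoffSum_indicator_one_le_of_no_early_visit f A hvisit
      linarith [mul_le_mul_of_nonneg_left (hγ n x) hN0, mul_le_mul_of_nonpos_left hcount hγa]

end

section

variable {α : Type*} [MeasurableSpace α] {μ : Measure α} [IsFiniteMeasure μ] {f : α → α}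

theorem MeasureTheory.MeasurePreserving.neg_le_of_birkhoffSum_le
    (hf : MeasurePreserving f μ μ) {g : α → ℝ} (hg : Integrable g μ) (hg0 : ∫ x, g x ∂μ = 0)
    {γ a : ℝ} (hγ : ∀ n, 1 ≤ n → ∀ x, birkhoffSum f g n x ≤ γ)
    {A : Set α} (hAm : MeasurableSet A) (hA0 : μ A ≠ 0) {N : ℕ} (hN : 0 < N)
    (hA : ∀ x ∈ A, birkhoffSum f g N x ≤ a) : -γ ≤ a := by
  have hμA : 0 < μ.real A := ENNReal.toReal_pos hA0 (measure_ne_top μ A)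
  have hμ : 0 < μ.real Set.univ := hμA.trans_le (measureReal_mono (Set.subset_univ A))
  have hγ0 : 0 ≤ γ := by
    have h := integral_mono hg (integrable_const γ) fun x => by
      simpa using hγ 1 le_rfl x
    rw [hg0, integral_const, smul_eq_mul] at h
    exact nonneg_of_mul_nonneg_right h hμ
  have hγ' : ∀ n x, birkhoffSum f g n x ≤ γ := by
    rintro (_ | n) x
    · simpa using hγ0
    · exact hγ _ n.succ_pos x
  by_contra! hγa
  have hh : Integrable (A.indicator (1 : α → ℝ)) μ := (integrable_const (1 : ℝ)).indicator hAm
  have hint (n : ℕ) : 0 ≤ (γ + a) * (n * μ.real A) - N * a * μ.real Set.univ := by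
    have h : ∫ x, (N : ℝ) * birkhoffSum f g n x ∂μ ≤
        ∫ x, ((γ + a) * birkhoffSum f (A.indicator 1) n x - N * a) ∂μ :=
      integral_mono ((hf.integrable_birkhoffSum_s18 hg n).const_mul N)
        (((hf.integrable_birkhoffSum_s18 hh n).const_mul (γ + a)).sub (integrable_const _))
        (natCast_mul_birkhoffSum_le f A hN hγ' hA (by linarith) n)
    rw [integral_sub ((hf.integrable_birkhoffSum_s18 hh n).const_mul (γ + a)) (integrable_const _),
      integral_const_mul, integral_const_mul, hf.integral_birkhoffSum_s18 hg,
      hf.integral_birkhoffSum_s18 hh, integral_indicator_one hAm, hg0, integral_const] at h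
    simpa [mul_comm] using h
  have hc : 0 < -(γ + a) * μ.real A := mul_pos (by linarith) hμA
  obtain ⟨n, hn⟩ := exists_nat_gt (-(N * a * μ.real Set.univ) / (-(γ + a) * μ.real A))
  rw [div_lt_iff₀ hc] at hn
  linarith [hint n]

end

/-- if `γ` bounds `S_n φ − n β(φ)` from above, `μ` maximizes
`φ`, `x₀ ∈ supp μ` and `S_N φ(x₀) − N β(φ) < α`, then `α ≥ −γ`; equivalently
`S_n φ ≥ n β(φ) − γ` on `supp μ`. -/
theorem stmt18 {X : Type*} [MetricSpace X] [CompactSpace X]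
    [MeasurableSpace X] [BorelSpace X]
    (T : X → X) (hT : Continuous T)
    (φ : X → ℝ) (Kφ : NNReal) (hφ : LipschitzWith Kφ φ)
    (γ : ℝ)
    (hγ : ∀ n : ℕ, 1 ≤ n → ∀ x : X,
      ∑ k ∈ Finset.range n, φ (T^[k] x) - n * beta T φ ≤ γ)
    (μ : Measure X) (hμp : IsProbabilityMeasure μ) (hμinv : μ.map T = μ)
    (hμmax : ∫ x, φ x ∂μ = beta T φ)
    (x₀ : X) (hx₀ : x₀ ∈ msupp μ)
    (α : ℝ) (N : ℕ) (hN : 1 ≤ N)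
    (hα : ∑ k ∈ Finset.range N, φ (T^[k] x₀) - N * beta T φ < α) :
    -γ ≤ α := by
  set b := beta T φ
  set g : X → ℝ := fun x => φ x - b
  have hS (n : ℕ) (x : X) :
      birkhoffSum T g n x = ∑ k ∈ Finset.range n, φ (T^[k] x) - n * b := by
    rw [birkhoffSum_sub_const, nsmul_eq_mul]
    rfl
  have hf : MeasurePreserving T μ μ := ⟨hT.measurable, hμinv⟩
  have hgc : Continuous g := hφ.continuous.sub continuous_const
  have hg : Integrable g μ := hgc.integrable_of_hasCompactSupport (.of_compactSpace g)
  have hg0 : ∫ x, g x ∂μ = 0 := by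
    rw [integral_sub (hφ.continuous.integrable_of_hasCompactSupport (.of_compactSpace φ))
      (integrable_const b), hμmax, integral_const, probReal_univ, one_smul, sub_self]
  set A := {x | birkhoffSum T g N x < α}
  have hAopen : IsOpen A := isOpen_lt (hT.birkhoffSum hgc N) continuous_const
  have hA0 : μ A ≠ 0 := (hx₀ A hAopen (show _ < α by rw [hS]; exact hα)).ne'
  exact hf.neg_le_of_birkhoffSum_le hg hg0 (fun n hn x => hS n x ▸ hγ n hn x)
    hAopen.measurableSet hA0 hN fun x hx => le_of_lt hx
end
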